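/- arXiv:1204.5441 — 8 statements merged into one kernel-verified Lean document; each statement's English description precedes it below -/
import Mathlib

section
/- Let f(x) = x^n + a_{n-1} x^{n-1} + ... + a_0 be a monic irreducible polynomial over F_q with root α in an algebraic closure of F_q, and let β be a root of x^2 - α x + 1 with β not in F_q(α). Then the minimal polynomial of β over F_q equals g(x) = x^n · f(x + 1/x), and this polynomial is symplectic of degree 2n. -/
open Polynomial Finset

noncomputable def sympPoly {K : Type} [Field K] (f : K[X]) (n : ℕ) : K[X] :=
  ∑ i ∈ Finset.range (n + 1), C (f.coeff i) * (X ^ 2 + 1) ^ i * X ^ (n - i)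

lemma aeval_sympPoly {K : Type} [Field K] {L : Type*} [Field L] [Algebra K L]
    (f : K[X]) {n : ℕ} (hdeg : f.natDegree = n) (x : L) (hx : x ≠ 0) :
    aeval x (sympPoly f n) = x ^ n * aeval (x + x⁻¹) f := by
  have h1 : aeval (x + x⁻¹) f = ∑ i ∈ range (n + 1), f.coeff i • (x + x⁻¹) ^ i := by
    rw [← hdeg]; exact Polynomial.aeval_eq_sum_range _
  rw [h1, Finset.mul_sum, sympPoly, map_sum]
  refine Finset.sum_congr rfl fun i hi => ?_
  have hi' : i ≤ n := Nat.lt_succ_iff.mp (Finset.mem_range.mp hi)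
  have key : ((x : L) ^ 2 + 1) ^ i = (x + x⁻¹) ^ i * x ^ i := by
    rw [← mul_pow]; congr 1; field_simp
  have hxpow : x ^ i * x ^ (n - i) = x ^ n := by
    rw [← pow_add, Nat.add_sub_cancel' hi']
  simp only [map_mul, map_pow, map_add, map_one, aeval_C, aeval_X]
  rw [key, Algebra.smul_def]
  linear_combination (algebraMap K L (f.coeff i) * (x + x⁻¹) ^ i) * hxpow

lemma sympPoly_monic {K : Type} [Field K] (f : K[X]) {n : ℕ}
    (hm : f.Monic) (hdeg : f.natDegree = n) :
    (sympPoly f n).Monic ∧ (sympPoly f n).natDegree = 2 * n := by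
  have hq : ((X : K[X]) ^ 2 + 1).Monic := by
    simpa using Polynomial.monic_X_pow_add_C (1 : K) (two_ne_zero)
  have hqd : ((X : K[X]) ^ 2 + 1).natDegree = 2 := by compute_degree!
  have hcn : f.coeff n = 1 := by rw [← hdeg]; exact hm.coeff_natDegree
  have hsplit : sympPoly f n
      = ((X : K[X]) ^ 2 + 1) ^ n + ∑ i ∈ range n, C (f.coeff i) * (X ^ 2 + 1) ^ i * X ^ (n - i) := by
    rw [sympPoly, Finset.sum_range_succ, hcn]
    simp [add_comm]
  have hpow : (((X : K[X]) ^ 2 + 1) ^ n).Monic := hq.pow n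
  have hpowd : (((X : K[X]) ^ 2 + 1) ^ n).natDegree = 2 * n := by
    rw [natDegree_pow, hqd, Nat.mul_comm]
  have hrest : (∑ i ∈ range n, C (f.coeff i) * ((X : K[X]) ^ 2 + 1) ^ i * X ^ (n - i)).degree
      < (((X : K[X]) ^ 2 + 1) ^ n).degree := by
    rw [degree_eq_natDegree hpow.ne_zero, hpowd]
    refine lt_of_le_of_lt (Polynomial.degree_sum_le _ _) ?_
    rw [Finset.sup_lt_iff (by exact_mod_cast WithBot.bot_lt_coe (2 * n))]
    intro i hi
    have hin : i < n := Finset.mem_range.mp hi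
    have hb : (C (f.coeff i) * ((X : K[X]) ^ 2 + 1) ^ i * X ^ (n - i)).natDegree < 2 * n := by
      have h1 := natDegree_mul_le (p := C (f.coeff i) * ((X : K[X]) ^ 2 + 1) ^ i)
        (q := (X : K[X]) ^ (n - i))
      have h2 := natDegree_mul_le (p := C (f.coeff i)) (q := ((X : K[X]) ^ 2 + 1) ^ i)
      simp only [natDegree_C, natDegree_pow, hqd, natDegree_X_pow, natDegree_X, zero_add] at h1 h2
      omega
    exact lt_of_le_of_lt degree_le_natDegree (by exact_mod_cast hb)
  constructor
  · rw [hsplit]; exact hpow.add_of_left hrest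
  · rw [hsplit, natDegree_eq_of_degree_eq (degree_add_eq_left_of_degree_lt hrest), hpowd]

lemma sympPoly_coeff_zero {K : Type} [Field K] (f : K[X]) {n : ℕ}
    (hm : f.Monic) (hdeg : f.natDegree = n) :
    (sympPoly f n).coeff 0 = 1 := by
  have hcn : f.coeff n = 1 := by rw [← hdeg]; exact hm.coeff_natDegree
  rw [coeff_zero_eq_eval_zero, sympPoly, eval_finset_sum]
  rw [Finset.sum_eq_single n]
  · simp [hcn]
  · intro i hi hne
    have h0 : n - i ≠ 0 := by have := Finset.mem_range.mp hi; omega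
    simp [zero_pow h0]
  · intro h; exact absurd (Finset.self_mem_range_succ n) h
set_option maxHeartbeats 1000000 in
set_option synthInstance.maxHeartbeats 400000 in
/-- If `f` is monic irreducible of degree `n` over a finite field `K` with root `α`,
and `β` is a root of `x² - αx + 1` not lying in `K(α)`, then the minimal polynomial
of `β` over `K` is the symplectic polynomial `g(x) = xⁿ · f(x + 1/x)` of degree `2n`. -/
theorem stmt1 {K : Type} [Field K] [Fintype K] {n : ℕ} (hn : 1 ≤ n)
    (f : K[X]) (hmonic : f.Monic) (hirr : Irreducible f) (hdeg : f.natDegree = n)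
    (α β : AlgebraicClosure K) (hα : aeval α f = 0)
    (hβ : β ^ 2 - α * β + 1 = 0) (hβα : β ∉ IntermediateField.adjoin K {α}) :
    (minpoly K β).Monic ∧ (minpoly K β).natDegree = 2 * n ∧
    (∀ i, 1 ≤ i → i ≤ n → (minpoly K β).coeff i = (minpoly K β).coeff (2 * n - i)) ∧
    (minpoly K β).coeff 0 = 1 ∧
    ∀ x : AlgebraicClosure K, x ≠ 0 →
      aeval x (minpoly K β) = x ^ n * aeval (x + x⁻¹) f := by
  have hβ0 : β ≠ 0 := by
    rintro rfl
    norm_num at hβ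
  have hαβ : β + β⁻¹ = α := by
    have h1 : (β + β⁻¹) * β = α * β := by field_simp; linear_combination hβ
    exact mul_right_cancel₀ hβ0 h1
  -- integrality
  have hβint : IsIntegral K β := Algebra.IsIntegral.isIntegral β
  have hαint : IsIntegral K α := Algebra.IsIntegral.isIntegral α
  have hfmin : minpoly K α = f :=
    (minpoly.eq_of_irreducible_of_monic hirr hα hmonic).symm
  -- the tower
  set E := IntermediateField.adjoin K {α} with hE
  have hfinE : Module.finrank K E = n := by
    rw [hE, IntermediateField.adjoin.finrank hαint, hfmin, hdeg]
  set αE : E := ⟨α, IntermediateField.mem_adjoin_simple_self K α⟩ with hαE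
  set p : E[X] := X ^ 2 + C (-αE) * X + 1 with hp
  have hpm : p.Monic := by rw [hp]; monicity!
  have hpd : p.natDegree = 2 := by rw [hp]; compute_degree!
  have hpβ : aeval β p = 0 := by
    have hcast : (algebraMap E (AlgebraicClosure K)) αE = α := rfl
    simp only [hp, map_add, map_mul, map_pow, aeval_X, aeval_C, map_one, map_neg, hcast]
    linear_combination hβ
  have hβintE : IsIntegral E β := ⟨p, hpm, by rw [← aeval_def]; exact hpβ⟩
  have hd2 : (minpoly E β).natDegree = 2 := by
    refine le_antisymm ?_ ?_
    · calc (minpoly E β).natDegree ≤ p.natDegree :=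
            natDegree_le_of_dvd (minpoly.dvd E β hpβ) hpm.ne_zero
        _ = 2 := hpd
    · refine (minpoly.two_le_natDegree_iff hβintE).mpr ?_
      rintro ⟨y, rfl⟩
      exact hβα y.2
  have hfin2 : Module.finrank E (IntermediateField.adjoin E {β}) = 2 := by
    rw [IntermediateField.adjoin.finrank hβintE, hd2]
  have hαmem : α ∈ IntermediateField.adjoin K {β} := by
    rw [← hαβ]
    exact add_mem (IntermediateField.mem_adjoin_simple_self K β)
      (inv_mem (IntermediateField.mem_adjoin_simple_self K β))
  have hres : (IntermediateField.adjoin E {β}).restrictScalars K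
      = IntermediateField.adjoin K {β} := by
    rw [hE, IntermediateField.adjoin_adjoin_left]
    refine le_antisymm ?_ (IntermediateField.adjoin.mono _ _ _ Set.subset_union_right)
    rw [IntermediateField.adjoin_le_iff]
    rintro x (rfl | rfl)
    · exact hαmem
    · exact IntermediateField.mem_adjoin_simple_self K x
  have hfinβ : Module.finrank K (IntermediateField.adjoin K {β}) = 2 * n := by
    rw [← hres]
    have : Module.finrank K ((IntermediateField.adjoin E {β}).restrictScalars K)
        = Module.finrank K (IntermediateField.adjoin E {β}) := rfl
    rw [this, ← Module.finrank_mul_finrank K E (IntermediateField.adjoin E {β}), hfinE, hfin2,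
      Nat.mul_comm]
  have hmd : (minpoly K β).natDegree = 2 * n :=
    (IntermediateField.adjoin.finrank hβint).symm.trans hfinβ
  -- the symplectic polynomial
  obtain ⟨hgm, hgd⟩ := sympPoly_monic f hmonic hdeg
  have hgβ : aeval β (sympPoly f n) = 0 := by
    rw [aeval_sympPoly f hdeg β hβ0, hαβ, hα, mul_zero]
  have hmm : (minpoly K β).Monic := minpoly.monic hβint
  have heq : minpoly K β = sympPoly f n := by
    obtain ⟨c, hc⟩ := minpoly.dvd K β hgβ
    have hc0 : c ≠ 0 := by
      rintro rfl; rw [mul_zero] at hc; exact hgm.ne_zero hc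
    have hcd : c.natDegree = 0 := by
      have h1 : (sympPoly f n).natDegree = (minpoly K β).natDegree + c.natDegree := by
        rw [hc, natDegree_mul hmm.ne_zero hc0]
      omega
    have hcl : c.coeff 0 = 1 := by
      have h2 := hgm.leadingCoeff
      rw [hc, leadingCoeff_mul, hmm.leadingCoeff, one_mul] at h2
      rwa [leadingCoeff, hcd] at h2
    have hc1 : c = 1 := by
      rw [eq_C_of_natDegree_eq_zero hcd, hcl, map_one]
    rw [hc, hc1, mul_one]
  -- symmetry of coefficients
  have hpowid : ∀ (x : AlgebraicClosure K), x ≠ 0 → ∀ j, j ≤ 2 * n →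
      x ^ (2 * n) * (x⁻¹) ^ j = x ^ (2 * n - j) := by
    intro x hx j hj
    have h1 : x ^ (2 * n - j) * x ^ j = x ^ (2 * n) := by
      rw [← pow_add]; congr 1; omega
    rw [inv_pow, ← h1, mul_assoc, mul_inv_cancel₀ (pow_ne_zero j hx), mul_one]
  set G : K[X] := ∑ j ∈ range (2 * n + 1), C ((sympPoly f n).coeff (2 * n - j)) * X ^ j with hG
  have hmapeq : ∀ (x : AlgebraicClosure K), x ≠ 0 → aeval x G = aeval x (sympPoly f n) := by
    intro x hx
    have hx' : x⁻¹ ≠ 0 := inv_ne_zero hx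
    have e2 : aeval x⁻¹ (sympPoly f n) = (x⁻¹) ^ n * aeval (x + x⁻¹) f := by
      have := aeval_sympPoly f hdeg x⁻¹ hx'
      rwa [inv_inv, add_comm x⁻¹ x] at this
    have e4 : aeval x⁻¹ (sympPoly f n)
        = ∑ j ∈ range (2 * n + 1), (sympPoly f n).coeff j • (x⁻¹ : AlgebraicClosure K) ^ j := by
      rw [← hgd]
      exact Polynomial.aeval_eq_sum_range _
    have e3 : aeval x G = x ^ (2 * n) * aeval x⁻¹ (sympPoly f n) := by
      rw [hG, map_sum, e4, Finset.mul_sum,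
        ← Finset.sum_range_reflect
          (fun j => (aeval x) (C ((sympPoly f n).coeff (2 * n - j)) * X ^ j)) (2 * n + 1)]
      refine Finset.sum_congr rfl fun j hj => ?_
      have hj' : j ≤ 2 * n := Nat.lt_succ_iff.mp (Finset.mem_range.mp hj)
      have hr : 2 * n + 1 - 1 - j = 2 * n - j := by omega
      have hr2 : 2 * n - (2 * n - j) = j := by omega
      simp only [hr, hr2, map_mul, aeval_C, map_pow, aeval_X, Algebra.smul_def]
      rw [← hpowid x hx j hj']
      ring
    have h5 : 2 * n - n = n := by omega
    rw [e3, e2, aeval_sympPoly f hdeg x hx, ← mul_assoc, hpowid x hx n (by omega), h5]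
  have hGeq : G = sympPoly f n := by
    have hinf : ({0}ᶜ : Set (AlgebraicClosure K)).Infinite :=
      Set.Finite.infinite_compl (Set.finite_singleton 0)
    have hmap : Polynomial.map (algebraMap K (AlgebraicClosure K)) G
        = Polynomial.map (algebraMap K (AlgebraicClosure K)) (sympPoly f n) := by
      apply Polynomial.eq_of_infinite_eval_eq
      refine hinf.mono fun x hx => ?_
      simp only [Set.mem_compl_iff, Set.mem_singleton_iff] at hx
      simp only [Set.mem_setOf_eq]
      rw [eval_map, eval_map, ← aeval_def, ← aeval_def]
      exact hmapeq x hx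
    exact Polynomial.map_injective _ (algebraMap K (AlgebraicClosure K)).injective hmap
  refine ⟨hmm, hmd, ?_, ?_, ?_⟩
  · intro i hi1 hi2
    rw [heq]
    conv_lhs => rw [← hGeq]
    rw [hG, finset_sum_coeff, Finset.sum_eq_single i]
    · rw [coeff_C_mul, coeff_X_pow, if_pos rfl, mul_one]
    · intro j hj hne
      simp [coeff_X_pow, Ne.symm hne]
    · intro h; exact absurd (Finset.mem_range.mpr (by omega)) h
  · rw [heq]; exact sympPoly_coeff_zero f hmonic hdeg
  · intro x hx
    rw [heq, aeval_sympPoly f hdeg x hx]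
end

section
/- Let f be a monic irreducible polynomial over F_q of degree n with root α, and let β be a root of x^2 - αx + 1 not lying in F_q(α). Then the trace of α from F_q(α) to F_q equals the trace of β from F_q(β) to F_q. -/
/-!
Since `β² - αβ + 1 = 0`, we have `α = β + β⁻¹ ∈ K(β)`, so `K(β) = K(α)(β)`. As `β ∉ K(α)`, its
minimal polynomial over `K(α)` is `X² - αX + 1`, whence `tr_{K(β)/K(α)}(β) = α`, and transitivity
of the trace in the tower `K ⊆ K(α) ⊆ K(β)` gives the claim.
-/

open Polynomial IntermediateField

section

variable {K L : Type*} [Field K] [Field L] [Algebra K L]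

theorem minpoly.eq_of_monic_of_natDegree_eq_two {x : L} {g : K[X]} (hg : g.Monic)
    (hdeg : g.natDegree = 2) (hx : Polynomial.aeval x g = 0) (hxK : x ∉ (algebraMap K L).range) :
    minpoly K x = g := by
  have hint : IsIntegral K x := ⟨g, hg, hx⟩
  refine eq_of_monic_of_associated (minpoly.monic hint) hg ?_
  refine associated_of_dvd_of_natDegree_le (minpoly.dvd K x hx) hg.ne_zero ?_
  rw [hdeg]
  exact (minpoly.two_le_natDegree_iff hint).2 hxK

theorem isIntegral_of_sq_sub_mul_add {a c : K} {x : L}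
    (hx : x ^ 2 - algebraMap K L a * x + algebraMap K L c = 0) : IsIntegral K x :=
  ⟨X ^ 2 - C a * X + C c, by monicity!, by simpa using hx⟩

theorem IntermediateField.AdjoinSimple.trace_gen_eq_of_sq_sub_mul_add {a c : K} {x : L}
    (hx : x ^ 2 - algebraMap K L a * x + algebraMap K L c = 0)
    (hxK : x ∉ (algebraMap K L).range) :
    Algebra.trace K K⟮x⟯ (AdjoinSimple.gen K x) = a := by
  have hg : (X ^ 2 - C a * X + C c : K[X]).Monic := by monicity!
  have hdeg : (X ^ 2 - C a * X + C c : K[X]).natDegree = 2 := by compute_degree!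
  rw [trace_adjoinSimpleGen (isIntegral_of_sq_sub_mul_add hx),
    minpoly.eq_of_monic_of_natDegree_eq_two hg hdeg (by simpa using hx) hxK,
    nextCoeff_of_natDegree_pos (by omega), hdeg]
  simp [coeff_C]

theorem trace_adjoinSimpleGen_eq_trace_trace {a b : L} (ha : IsIntegral K a)
    (hb : IsIntegral K⟮a⟯ b) (hab : a ∈ K⟮b⟯) :
    Algebra.trace K K⟮b⟯ (AdjoinSimple.gen K b) =
      Algebra.trace K K⟮a⟯ (Algebra.trace K⟮a⟯ (adjoin K⟮a⟯ {b}) (AdjoinSimple.gen K⟮a⟯ b)) := by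
  have : FiniteDimensional K K⟮a⟯ := adjoin.finiteDimensional ha
  have : FiniteDimensional K⟮a⟯ (adjoin K⟮a⟯ {b}) := adjoin.finiteDimensional hb
  have : Module.Free K⟮a⟯ (adjoin K⟮a⟯ {b}) := Module.Free.of_divisionRing _ _
  have hKab : (adjoin K⟮a⟯ {b}).restrictScalars K = K⟮b⟯ := by
    rw [adjoin_adjoin_left]
    refine le_antisymm ?_ (adjoin.mono K _ _ Set.subset_union_right)
    exact adjoin_le_iff.2 (Set.union_subset (Set.singleton_subset_iff.2 hab)
      (subset_adjoin K {b}))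
  rw [Algebra.trace_trace (S := K⟮a⟯), ← Algebra.trace_eq_of_algEquiv (equivOfEq hKab).symm]
  rfl

theorem IntermediateField.AdjoinSimple.trace_gen_eq_trace_gen_of_sq_sub_mul_add_one {a b : L}
    (hb : b ^ 2 - a * b + 1 = 0) (hba : b ∉ K⟮a⟯) :
    Algebra.trace K K⟮a⟯ (AdjoinSimple.gen K a) = Algebra.trace K K⟮b⟯ (AdjoinSimple.gen K b) := by
  have hb0 : b ≠ 0 := by rintro rfl; simp at hb
  have ha_eq : a = b + b⁻¹ := by field_simp; linear_combination -hb
  have hab : a ∈ K⟮b⟯ :=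
    ha_eq ▸ add_mem (mem_adjoin_simple_self K b) (inv_mem (mem_adjoin_simple_self K b))
  by_cases ha : IsIntegral K a
  swap
  -- both traces are the junk value `0` of an infinite extension
  · have hb' : ¬IsIntegral K b := fun hb' ↦ ha (ha_eq ▸ hb'.add hb'.inv)
    rw [trace_gen_eq_zero ha, trace_gen_eq_zero hb']
  have hb_over :
      b ^ 2 - algebraMap K⟮a⟯ L (AdjoinSimple.gen K a) * b + algebraMap K⟮a⟯ L 1 = 0 := by
    simpa using hb
  have hba' : b ∉ (algebraMap K⟮a⟯ L).range := by
    rintro ⟨y, rfl⟩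
    exact hba y.2
  rw [trace_adjoinSimpleGen_eq_trace_trace ha (isIntegral_of_sq_sub_mul_add hb_over) hab,
    trace_gen_eq_of_sq_sub_mul_add hb_over hba']

end

theorem stmt2_general {K : Type} [Field K]
    (α β : AlgebraicClosure K)
    (hβ : β ^ 2 - α * β + 1 = 0) (hβα : β ∉ IntermediateField.adjoin K {α}) :
    Algebra.trace K (IntermediateField.adjoin K {α})
        ⟨α, IntermediateField.mem_adjoin_simple_self K α⟩
      = Algebra.trace K (IntermediateField.adjoin K {β})
        ⟨β, IntermediateField.mem_adjoin_simple_self K β⟩ :=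
  AdjoinSimple.trace_gen_eq_trace_gen_of_sq_sub_mul_add_one hβ hβα

/-- If `f` is monic irreducible of degree `n` over a finite field `K` with root `α`, and
`β` is a root of `x² - αx + 1` with `β ∉ K(α)`, then `tr_{K(α)/K}(α) = tr_{K(β)/K}(β)`. -/
theorem stmt2 {K : Type} [Field K] [Fintype K] {n : ℕ} (hn : 1 ≤ n)
    (f : K[X]) (hmonic : f.Monic) (hirr : Irreducible f) (hdeg : f.natDegree = n)
    (α β : AlgebraicClosure K) (hα : aeval α f = 0)
    (hβ : β ^ 2 - α * β + 1 = 0) (hβα : β ∉ IntermediateField.adjoin K {α}) :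
    Algebra.trace K (IntermediateField.adjoin K {α})
        ⟨α, IntermediateField.mem_adjoin_simple_self K α⟩
      = Algebra.trace K (IntermediateField.adjoin K {β})
        ⟨β, IntermediateField.mem_adjoin_simple_self K β⟩ :=
  stmt2_general α β hβ hβα
end

section
/- For a prime p, a power q of p, and a positive integer n not divisible by p, the number of monic irreducible polynomials in F_q[x] of degree n whose coefficient of x^{n-1} is nonzero equals ((q-1)/(q·n)) · Σ_{d | n} μ(d) · q^{n/d}, where μ is the Möbius function. -/
/-!
`X ^ q ^ m - X` is the squarefree product of the monic irreducible polynomials whose degree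
divides `m`, so comparing degrees gives `∑_{d ∣ m} d N_d = q ^ m`, where `N_d` counts the monic
irreducibles of degree `d`; Möbius inversion gives `n N_n`. Substituting `X ↦ X + c` in a monic polynomial of degree `n` preserves irreducibility and
adds `n c` to the coefficient of `X ^ (n - 1)`. As `p ∤ n`, this makes the monic irreducibles of
degree `n` a product of those with vanishing `X ^ (n - 1)`-coefficient and `𝔽_q`, so a fraction
`(q - 1) / q` of them have a nonzero coefficient.
-/

open Polynomial ArithmeticFunction Finset

namespace Polynomial

open UniqueFactorizationMonoid

theorem natDegree_eq_sum_natDegree_normalizedFactors {K : Type*} [Field K] [DecidableEq K]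
    {g : K[X]} (hg : Squarefree g) :
    g.natDegree = ∑ f ∈ (normalizedFactors g).toFinset, f.natDegree := by
  have hg0 : g ≠ 0 := hg.ne_zero
  rw [sum_eq_multiset_sum, Multiset.toFinset_val,
    Multiset.dedup_eq_self.2 ((squarefree_iff_nodup_normalizedFactors hg0).1 hg),
    ← natDegree_multiset_prod _ (zero_notMem_normalizedFactors g), prod_normalizedFactors_eq hg0,
    natDegree_eq_of_degree_eq degree_normalize]

theorem coeff_taylor_natDegree_sub_one {R : Type*} [CommRing R] (f : R[X]) (c : R) :
    (taylor c f).coeff (f.natDegree - 1) =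
      f.coeff (f.natDegree - 1) + f.natDegree * f.leadingCoeff * c := by
  rcases Nat.eq_zero_or_pos f.natDegree with h | h
  · rw [h, eq_C_of_natDegree_eq_zero h]
    simp
  have hle : (hasseDeriv (f.natDegree - 1) f).natDegree < 2 := by
    have := natDegree_hasseDeriv_le f (f.natDegree - 1)
    omega
  rw [taylor_coeff, eval_eq_sum_range' hle, sum_range_succ, sum_range_one,
    hasseDeriv_coeff, hasseDeriv_coeff, zero_add, Nat.choose_self, add_comm 1,
    Nat.sub_add_cancel h, Nat.choose_symm_of_eq_add (Nat.sub_add_cancel h).symm]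
  simp

end Polynomial

section FiniteField

variable {K : Type*} [Field K] [Finite K]

section

open UniqueFactorizationMonoid

theorem mem_normalizedFactors_X_pow_card_pow_sub_X [DecidableEq K] {m : ℕ} (hm : m ≠ 0)
    {f : K[X]} : f ∈ normalizedFactors (X ^ Nat.card K ^ m - X : K[X]) ↔
      f.Monic ∧ Irreducible f ∧ f.natDegree ∣ m := by
  rw [Polynomial.mem_normalizedFactors_iff
    (FiniteField.X_pow_card_pow_sub_X_ne_zero K hm Finite.one_lt_card)]
  constructor
  · rintro ⟨hirr, hmon, hdvd⟩
    exact ⟨hmon, hirr, hirr.natDegree_dvd_of_dvd_X_pow_card_pow_sub_X hdvd⟩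
  · rintro ⟨hmon, hirr, hdvd⟩
    exact ⟨hirr, hmon, hirr.natDegree_dvd_iff_dvd_X_pow_card_pow_sub_X.1 hdvd⟩

theorem squarefree_X_pow_card_pow_sub_X {m : ℕ} (hm : m ≠ 0) :
    Squarefree (X ^ Nat.card K ^ m - X : K[X]) := by
  have := Fintype.ofFinite K
  have hchar : ringChar K ∣ Nat.card K :=
    ringChar.dvd (by simp only [Nat.card_eq_fintype_card, Nat.cast_card_eq_zero])
  exact (galois_poly_separable (ringChar K) _ (dvd_pow hchar hm)).squarefree

theorem finite_monic_irreducible_natDegree_eq {n : ℕ} (hn : n ≠ 0) :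
    Finite {f : K[X] // f.Monic ∧ Irreducible f ∧ f.natDegree = n} := by
  classical
  refine Set.Finite.subset
    (normalizedFactors (X ^ Nat.card K ^ n - X : K[X])).toFinset.finite_toSet
    fun f ⟨hmon, hirr, hdeg⟩ => ?_
  rw [mem_coe, Multiset.mem_toFinset, mem_normalizedFactors_X_pow_card_pow_sub_X hn]
  exact ⟨hmon, hirr, hdeg.dvd⟩

theorem sum_divisors_mul_card_monic_irreducible {m : ℕ} (hm : m ≠ 0) :
    ∑ d ∈ m.divisors, d * Nat.card {f : K[X] // f.Monic ∧ Irreducible f ∧ f.natDegree = d} =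
      Nat.card K ^ m := by
  classical
  set T := (normalizedFactors (X ^ Nat.card K ^ m - X : K[X])).toFinset
  have hT (f : K[X]) : f ∈ T ↔ f.Monic ∧ Irreducible f ∧ f.natDegree ∣ m := by
    rw [Multiset.mem_toFinset, mem_normalizedFactors_X_pow_card_pow_sub_X hm]
  have hcard {d : ℕ} (hd : d ∣ m) :
      Nat.card {f : K[X] // f.Monic ∧ Irreducible f ∧ f.natDegree = d} =
        #{f ∈ T | f.natDegree = d} := by
    rw [← Nat.card_eq_finsetCard]
    refine Nat.card_congr (Equiv.subtypeEquivRight fun f => ?_)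
    rw [mem_filter, hT]
    constructor
    · rintro ⟨hmon, hirr, rfl⟩
      exact ⟨⟨hmon, hirr, hd⟩, rfl⟩
    · rintro ⟨⟨hmon, hirr, -⟩, rfl⟩
      exact ⟨hmon, hirr, rfl⟩
  calc _ = ∑ d ∈ m.divisors, ∑ f ∈ T with f.natDegree = d, f.natDegree := by
        refine sum_congr rfl fun d hd => ?_
        rw [hcard (Nat.dvd_of_mem_divisors hd), sum_congr rfl fun f hf => (mem_filter.1 hf).2,
          sum_const, smul_eq_mul, mul_comm]
    _ = ∑ f ∈ T, f.natDegree :=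
        sum_fiberwise_of_maps_to (fun f hf => Nat.mem_divisors.2 ⟨((hT f).1 hf).2.2, hm⟩) _
    _ = (X ^ Nat.card K ^ m - X : K[X]).natDegree :=
        (natDegree_eq_sum_natDegree_normalizedFactors (squarefree_X_pow_card_pow_sub_X hm)).symm
    _ = Nat.card K ^ m := FiniteField.X_pow_card_pow_sub_X_natDegree_eq K hm Finite.one_lt_card

end

theorem card_monic_irreducible_mul_eq_sum_moebius {n : ℕ} (hn : n ≠ 0) :
    (n : ℤ) * Nat.card {f : K[X] // f.Monic ∧ Irreducible f ∧ f.natDegree = n} =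
      ∑ d ∈ n.divisors, (moebius d : ℤ) * (Nat.card K : ℤ) ^ (n / d) := by
  have hinv := (sum_eq_iff_sum_mul_moebius_eq
      (f := fun d =>
        (d : ℤ) * Nat.card {f : K[X] // f.Monic ∧ Irreducible f ∧ f.natDegree = d})
      (g := fun m => (Nat.card K : ℤ) ^ m)).1
    (fun m hm => by exact_mod_cast sum_divisors_mul_card_monic_irreducible hm.ne')
    n (Nat.pos_of_ne_zero hn)
  rw [← hinv,
    ← Nat.sum_divisorsAntidiagonal fun a b => (moebius a : ℤ) * (Nat.card K : ℤ) ^ b]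
  simp only [Int.cast_eq]

end FiniteField

theorem Nat.card_subtype_and_add_card_subtype_and_not {α : Type*} (p q : α → Prop)
    [Finite {x // p x}] :
    Nat.card {x // p x ∧ q x} + Nat.card {x // p x ∧ ¬ q x} = Nat.card {x // p x} := by
  classical
  rw [← Nat.card_congr (Equiv.subtypeSubtypeEquivSubtypeInter p q),
    ← Nat.card_congr (Equiv.subtypeSubtypeEquivSubtypeInter p fun x => ¬ q x), ← Nat.card_sum]
  exact Nat.card_congr (Equiv.sumCompl _)

section Translation

variable {K : Type*} [Field K] {n : ℕ}

theorem monic_irreducible_natDegree_taylor (c : K) {f : K[X]}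
    (hf : f.Monic ∧ Irreducible f ∧ f.natDegree = n) :
    (taylor c f).Monic ∧ Irreducible (taylor c f) ∧ (taylor c f).natDegree = n :=
  ⟨by rw [Monic, leadingCoeff_taylor, hf.1.leadingCoeff],
    (MulEquiv.irreducible_iff (taylorEquiv c)).2 hf.2.1, by rw [natDegree_taylor, hf.2.2]⟩

theorem coeff_taylor_sub_one_of_monic {f : K[X]} (hf : f.Monic) (hdeg : f.natDegree = n)
    (c : K) : (taylor c f).coeff (n - 1) = f.coeff (n - 1) + n * c := by
  rw [← hdeg, coeff_taylor_natDegree_sub_one, hf.leadingCoeff, mul_one]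

noncomputable def taylorEquivMonicIrreducible (hn : (n : K) ≠ 0) :
    {f : K[X] // (f.Monic ∧ Irreducible f ∧ f.natDegree = n) ∧ f.coeff (n - 1) = 0} × K ≃
      {f : K[X] // f.Monic ∧ Irreducible f ∧ f.natDegree = n} where
  toFun fc := ⟨taylor fc.2 fc.1, monic_irreducible_natDegree_taylor fc.2 fc.1.2.1⟩
  invFun g :=
    (⟨taylor (-(g.1.coeff (n - 1) / n)) g, monic_irreducible_natDegree_taylor _ g.2, by
      rw [coeff_taylor_sub_one_of_monic g.2.1 g.2.2.2, mul_neg, mul_div_cancel₀ _ hn,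
        add_neg_cancel]⟩,
      g.1.coeff (n - 1) / n)
  left_inv := by
    rintro ⟨⟨f, hf, hf0⟩, c⟩
    have hc : (taylor c f).coeff (n - 1) / n = c := by
      rw [coeff_taylor_sub_one_of_monic hf.1 hf.2.2, hf0, zero_add, mul_div_cancel_left₀ _ hn]
    ext <;> simp only [hc, taylor_taylor, neg_add_cancel, taylor_zero]
  right_inv g := by
    ext1
    simp only [taylor_taylor, add_neg_cancel, taylor_zero]

theorem card_mul_card_monic_irreducible_coeff_ne_zero [Finite K] (hn : (n : K) ≠ 0) :
    (Nat.card K : ℤ) * Nat.card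
        {f : K[X] // f.Monic ∧ Irreducible f ∧ f.natDegree = n ∧ f.coeff (n - 1) ≠ 0} =
      (Nat.card K - 1) * Nat.card {f : K[X] // f.Monic ∧ Irreducible f ∧ f.natDegree = n} := by
  have := finite_monic_irreducible_natDegree_eq (K := K) (n := n) fun h => hn (by simp [h])
  have hsplit := Nat.card_subtype_and_add_card_subtype_and_not
    (fun f : K[X] => f.Monic ∧ Irreducible f ∧ f.natDegree = n) (fun f => f.coeff (n - 1) = 0)
  have htranslate := Nat.card_congr (taylorEquivMonicIrreducible hn)
  rw [Nat.card_prod] at htranslate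
  simp only [and_assoc] at hsplit htranslate
  have hsplitZ : ((_ + _ : ℕ) : ℤ) = _ := congrArg Nat.cast hsplit
  have htranslateZ : ((_ * _ : ℕ) : ℤ) = _ := congrArg Nat.cast htranslate
  push_cast at hsplitZ htranslateZ
  linear_combination (Nat.card K : ℤ) * hsplitZ - htranslateZ

end Translation

theorem stmt3_general {K : Type} [Field K] [Fintype K] {p q n : ℕ} [CharP K p]
    (hq : Fintype.card K = q) (hpn : ¬ p ∣ n) :
    (q * n : ℤ) *
        Nat.card {f : K[X] // f.Monic ∧ Irreducible f ∧ f.natDegree = n ∧ f.coeff (n - 1) ≠ 0}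
      = (q - 1) * ∑ d ∈ n.divisors, (moebius d : ℤ) * (q : ℤ) ^ (n / d) := by
  have hnK : (n : K) ≠ 0 := fun h => hpn ((CharP.cast_eq_zero_iff K p n).1 h)
  have hn : n ≠ 0 := by
    rintro rfl
    exact hpn (dvd_zero p)
  have hcard : Nat.card K = q := Nat.card_eq_fintype_card.trans hq
  have htrace := card_mul_card_monic_irreducible_coeff_ne_zero hnK
  have hgauss := card_monic_irreducible_mul_eq_sum_moebius (K := K) hn
  rw [hcard] at htrace hgauss
  rw [← hgauss]
  linear_combination (n : ℤ) * htrace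

/-- The number of monic irreducible polynomials of degree `n` (with `p ∤ n`) over a
finite field of cardinality `q` whose coefficient of `x^(n-1)` is nonzero equals
`((q-1)/(q·n)) · Σ_{d | n} μ(d) q^(n/d)`. -/
theorem stmt3 {K : Type} [Field K] [Fintype K] {p q n : ℕ} (hp : p.Prime) [CharP K p]
    (hq : Fintype.card K = q) (hn : 1 ≤ n) (hpn : ¬ p ∣ n) :
    (q * n : ℤ) *
        Nat.card {f : K[X] // f.Monic ∧ Irreducible f ∧ f.natDegree = n ∧ f.coeff (n - 1) ≠ 0}
      = (q - 1) * ∑ d ∈ n.divisors, (moebius d : ℤ) * (q : ℤ) ^ (n / d) :=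
  stmt3_general hq hpn
end

section
/- Let q be a power of 2 and n ≥ 1. The number of elements α ∈ F_{q^n} such that the polynomial x² - αx + 1 is reducible over F_{q^n} equals q^n / 2. -/
open Polynomial

/-- Over the field with `q^n` elements, `q` a power of `2`, the number of `α` with
`x² - αx + 1` reducible equals `q^n / 2`. -/
theorem stmt6 {K : Type} [Field K] [Fintype K] {r q n : ℕ}
    (hq : q = 2 ^ r) (hr : 1 ≤ r) (hn : 1 ≤ n) (hcard : Fintype.card K = q ^ n) :
    2 * Nat.card {α : K // ¬ Irreducible (X ^ 2 - C α * X + 1 : K[X])} = q ^ n := by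
  classical
  have hcard2 : Fintype.card K = 2 ^ (r * n) := by rw [hcard, hq, pow_mul]
  have h2 : (2 : K) = 0 := by
    have h := FiniteField.cast_card_eq_zero K
    rw [hcard2] at h
    push_cast at h
    exact pow_eq_zero_iff (by positivity) |>.mp h
  have hadd : ∀ x : K, x + x = 0 := fun x => by
    have := congrArg (· * x) h2
    simpa [two_mul] using this
  have hneg : ∀ x : K, -x = x := fun x => neg_eq_of_add_eq_zero_left (hadd x)
  have hsq : ∀ β : K, β ^ 2 = 1 → β = 1 := by
    intro β hβ
    have h0 : (β + 1) ^ 2 = 0 := by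
      have : β * β + (β + β) + 1 = β ^ 2 + 1 := by rw [hadd β]; ring
      calc (β + 1) ^ 2 = β * β + (β + β) + 1 := by ring
      _ = β ^ 2 + 1 := this
      _ = 1 + 1 := by rw [hβ]
      _ = 0 := hadd 1
    have := pow_eq_zero_iff (n := 2) (by norm_num) |>.mp h0
    have := neg_eq_of_add_eq_zero_left this
    rw [hneg] at this; exact this.symm
  -- characterization of reducibility
  have key : ∀ α : K, ¬ Irreducible (X ^ 2 - C α * X + 1 : K[X]) ↔
      ∃ β : K, β ≠ 0 ∧ β + β⁻¹ = α := by
    intro α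
    have hm : (X ^ 2 - C α * X + 1 : K[X]).Monic := by monicity!
    have hd : (X ^ 2 - C α * X + 1 : K[X]).natDegree = 2 := by compute_degree!
    rw [hm.not_irreducible_iff_exists_add_mul_eq_coeff hd]
    have hc0 : (X ^ 2 - C α * X + 1 : K[X]).coeff 0 = 1 := by simp
    have hc1 : (X ^ 2 - C α * X + 1 : K[X]).coeff 1 = α := by
      have : (X ^ 2 - C α * X + 1 : K[X]).coeff 1 = -α := by simp [coeff_one]
      rw [this, hneg]
    rw [hc0, hc1]
    constructor
    · rintro ⟨c₁, c₂, h01, h1⟩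
      have hc₁ : c₁ ≠ 0 := fun h => by simp [h] at h01
      refine ⟨c₁, hc₁, ?_⟩
      have : c₂ = c₁⁻¹ := by field_simp; linear_combination -h01
      rw [← this]; exact h1.symm
    · rintro ⟨β, hβ, rfl⟩
      exact ⟨β, β⁻¹, by field_simp, rfl⟩
  -- counting
  set S : Finset K := Finset.univ.filter (fun α => ∃ β : K, β ≠ 0 ∧ β + β⁻¹ = α) with hS
  have hNat : Nat.card {α : K // ¬ Irreducible (X ^ 2 - C α * X + 1 : K[X])} = S.card := by
    rw [Nat.card_eq_fintype_card, Fintype.card_subtype]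
    congr 1
    ext α
    simp [key α, hS]
  rw [hNat]
  set T : Finset K := Finset.univ.filter (fun β : K => β ≠ 0) with hT
  have hTcard : T.card = Fintype.card K - 1 := by
    have : T = Finset.univ.erase 0 := by ext β; simp [hT]
    rw [this, Finset.card_erase_of_mem (Finset.mem_univ 0), Finset.card_univ]
  have hmap : ∀ β ∈ T, β + β⁻¹ ∈ S := by
    intro β hβ
    simp only [hT, Finset.mem_filter] at hβ
    simp only [hS, Finset.mem_filter, Finset.mem_univ, true_and]
    exact ⟨β, hβ.2, rfl⟩
  have hsum := Finset.card_eq_sum_card_fiberwise hmap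
  have hfiber : ∀ α ∈ S, (T.filter (fun β => β + β⁻¹ = α)).card
      = if α = 0 then 1 else 2 := by
    intro α hα
    simp only [hS, Finset.mem_filter, Finset.mem_univ, true_and] at hα
    obtain ⟨β₀, hβ₀, hβ₀α⟩ := hα
    have hset : T.filter (fun β => β + β⁻¹ = α) = {β₀, β₀⁻¹} := by
      ext β
      simp only [Finset.mem_filter, hT, Finset.mem_univ, true_and,
        Finset.mem_insert, Finset.mem_singleton]
      constructor
      · rintro ⟨hβ, hβα⟩
        have heq : β + β⁻¹ = β₀ + β₀⁻¹ := by rw [hβα, hβ₀α]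
        have h0 : (β - β₀) * (β * β₀ - 1) = 0 := by
          field_simp at heq
          linear_combination heq
        rcases mul_eq_zero.mp h0 with h | h
        · left; linear_combination h
        · right
          have : β * β₀ = 1 := by linear_combination h
          exact eq_inv_of_mul_eq_one_left this
      · rintro (rfl | rfl)
        · exact ⟨hβ₀, hβ₀α⟩
        · exact ⟨inv_ne_zero hβ₀, by rw [inv_inv, add_comm]; exact hβ₀α⟩
    rw [hset]
    by_cases hα0 : α = 0
    · have hβ1 : β₀ = 1 := by
        apply hsq
        have : β₀ + β₀⁻¹ = 0 := by rw [hβ₀α, hα0]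
        have h1 : β₀ * β₀ = 1 := by
          have := congrArg (· * β₀) this
          simp only [add_mul, zero_mul, inv_mul_cancel₀ hβ₀] at this
          have := neg_eq_of_add_eq_zero_left this
          rw [hneg] at this; exact this.symm
        rw [pow_two]; exact h1
      simp [hα0, hβ1]
    · have hne : β₀ ≠ β₀⁻¹ := by
        intro h
        have h1 : β₀ ^ 2 = 1 := by
          rw [pow_two]; nth_rewrite 2 [h]; exact mul_inv_cancel₀ hβ₀
        have := hsq β₀ h1
        apply hα0
        rw [← hβ₀α, this]
        simpa using hadd 1
      simp [hα0, Finset.card_insert_of_notMem, hne]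
  rw [Finset.sum_congr rfl hfiber] at hsum
  have h0S : (0 : K) ∈ S := by
    simp only [hS, Finset.mem_filter, Finset.mem_univ, true_and]
    exact ⟨1, one_ne_zero, by simpa using hadd 1⟩
  have hsplit : ∑ α ∈ S, (if α = 0 then 1 else 2) = 1 + 2 * (S.card - 1) := by
    rw [← Finset.insert_erase h0S, Finset.sum_insert (Finset.notMem_erase _ _)]
    have : ∑ α ∈ S.erase 0, (if α = 0 then 1 else 2) = 2 * (S.erase 0).card := by
      rw [Finset.sum_ite_of_false (by intro x hx; exact Finset.ne_of_mem_erase hx)]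
      rw [Finset.sum_const, smul_eq_mul, mul_comm]
    rw [if_pos rfl, this, Finset.card_erase_of_mem h0S, Finset.insert_erase h0S]
  have hScard1 : 1 ≤ S.card := Finset.card_pos.mpr ⟨0, h0S⟩
  have hqn2 : 2 ≤ q ^ n := by
    calc 2 = 2 ^ 1 := rfl
    _ ≤ 2 ^ (r * n) := Nat.pow_le_pow_right (by norm_num) (Nat.one_le_iff_ne_zero.mpr (by positivity))
    _ = q ^ n := by rw [hq, pow_mul]
  rw [hTcard, hcard, hsplit] at hsum
  omega
end

section
/- For q ≥ 5 a prime power and n a positive integer coprime to the characteristic, the quantity M = ((q-1)/q) · Σ_{d|n} μ(d) q^{n/d} - (q^n + 1)/2 is strictly positive. -/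
open ArithmeticFunction Finset

/-!
Writing `Σ_{d ∣ n} μ(d) q^(n/d) = Σ_{d ∣ n} μ(n/d) q^d`, the term `d = n` is `q^n` and every other
term is at least `-q^d` with `d < n`, so the sum is at least `q^n - (q^n - 1)/(q - 1)`.
The claim then reduces to `(q - 4) q^n > q - 2`, which holds once `q ≥ 5`.
-/

section

variable {R : Type*} [CommRing R] [LinearOrder R] [IsStrictOrderedRing R]

theorem neg_le_moebius_mul {y : R} (hy : 0 ≤ y) (m : ℕ) : -y ≤ (moebius m : R) * y := by
  have hμ : |(moebius m : R)| ≤ 1 := by exact_mod_cast abs_moebius_le_one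
  nlinarith [abs_le.mp hμ]

theorem sum_properDivisors_pow_le_geom_sum {x : R} (hx : 0 ≤ x) (n : ℕ) :
    ∑ d ∈ n.properDivisors, x ^ d ≤ ∑ k ∈ range n, x ^ k :=
  sum_le_sum_of_subset_of_nonneg
    (fun _ hd ↦ mem_range.mpr (Nat.mem_properDivisors.mp hd).2)
    (fun k _ _ ↦ pow_nonneg hx k)

theorem pow_sub_geom_sum_le_sum_moebius_mul_pow_div {x : R} (hx : 0 ≤ x) {n : ℕ} (hn : n ≠ 0) :
    x ^ n - ∑ k ∈ range n, x ^ k ≤ ∑ d ∈ n.divisors, (moebius d : R) * x ^ (n / d) := by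
  have hflip : ∑ d ∈ n.divisors, (moebius d : R) * x ^ (n / d)
      = ∑ d ∈ n.divisors, (moebius (n / d) : R) * x ^ d := by
    rw [← Nat.sum_div_divisors]
    refine sum_congr rfl fun d hd ↦ ?_
    rw [Nat.div_div_self (Nat.dvd_of_mem_divisors hd) hn]
  rw [hflip, ← Nat.cons_self_properDivisors hn, sum_cons, Nat.div_self (Nat.pos_of_ne_zero hn),
    moebius_apply_one, Int.cast_one, one_mul]
  calc x ^ n - ∑ k ∈ range n, x ^ k
      ≤ x ^ n - ∑ d ∈ n.properDivisors, x ^ d :=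
        sub_le_sub_left (sum_properDivisors_pow_le_geom_sum hx n) _
    _ = x ^ n + ∑ d ∈ n.properDivisors, -x ^ d := by rw [sum_neg_distrib, sub_eq_add_neg]
    _ ≤ x ^ n + ∑ d ∈ n.properDivisors, (moebius (n / d) : R) * x ^ d := by
        gcongr with d; exact neg_le_moebius_mul (pow_nonneg hx d) _

end

theorem stmt8_general {q n : ℕ} (h5 : 5 ≤ q) (hn : 1 ≤ n) :
    0 < ((q : ℚ) - 1) / q * ∑ d ∈ n.divisors, (moebius d : ℚ) * (q : ℚ) ^ (n / d)
          - ((q : ℚ) ^ n + 1) / 2 := by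
  have hq5 : (5 : ℚ) ≤ q := by exact_mod_cast h5
  have hq0 : (0 : ℚ) < q := by linarith
  have hsum := pow_sub_geom_sum_le_sum_moebius_mul_pow_div hq0.le (n := n) (by omega)
  have hgeom := geom_sum_mul (q : ℚ) n
  have hqn : (q : ℚ) ≤ (q : ℚ) ^ n := le_self_pow₀ (by linarith) (by omega)
  rw [div_mul_eq_mul_div, sub_pos, div_lt_div_iff₀ two_pos hq0]
  nlinarith

/-- For `q ≥ 5` a power of a prime `p` with `p ∤ n`, the quantity
`((q-1)/q) · Σ_{d|n} μ(d) q^(n/d) - (q^n + 1)/2` is strictly positive. -/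
theorem stmt8 {p r q n : ℕ} (hp : p.Prime) (hq : q = p ^ r) (h5 : 5 ≤ q)
    (hn : 1 ≤ n) (hpn : ¬ p ∣ n) :
    0 < ((q : ℚ) - 1) / q * ∑ d ∈ n.divisors, (moebius d : ℚ) * (q : ℚ) ^ (n / d)
          - ((q : ℚ) ^ n + 1) / 2 :=
  stmt8_general h5 hn
end

section
/- For every positive integer n ≥ 1, every prime p not dividing n, and every r ∈ ℕ with p^r ≥ 5, there exists a monic irreducible symplectic polynomial of degree 2n over F_{p^r} whose coefficient of x^{2n-1} is nonzero. -/
/-!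
Let `q = #K` and let `α` be a root of `X ^ (q ^ n + 1) - 1` in an extension of `K`, so that
`α ^ q ^ n = α⁻¹`. If the Frobenius orbit of `α` has length exactly `2n`, then the minimal
polynomial of `α` is `∏_{i < 2n} (X - α ^ q ^ i)`. It is self-reciprocal because `α⁻¹` is a
conjugate of `α`, its constant term is `α ^ (∑_{i < 2n} q ^ i) = 1` because `q ^ n + 1` divides
that exponent, and its coefficient of `X ^ (2n - 1)` is minus the trace `∑_{i < 2n} α ^ q ^ i`.

A counting argument gives such an `α` with nonzero trace. On these roots the trace equals
`P (α + α⁻¹)` with `P = ∑_{i < n} X ^ q ^ i`, so at most `2 q ^ (n - 1)` of them have trace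
zero. An orbit length that properly divides `2n` forces `α ^ 2 = 1` or `α ^ (q ^ e + 1) = 1` for
a proper divisor `e` of `n`. For `q ≥ 5` these two bad sets together have fewer than `q ^ n + 1`
elements.
-/

open Polynomial Finset Function

lemma Function.Periodic.prod_range_add {M : Type*} [CommMonoid M] {g : ℕ → M} {N : ℕ}
    (hg : Periodic g N) (c : ℕ) : ∏ i ∈ range N, g (i + c) = ∏ i ∈ range N, g i := by
  induction c with
  | zero => rfl
  | succ c ih =>
    rw [← ih]
    cases N with
    | zero => simp
    | succ N =>
      rw [prod_range_succ, prod_range_succ' (fun i => g (i + c)), zero_add,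
        show N + (c + 1) = c + (N + 1) by ring, hg c]
      simp only [add_right_comm _ 1 c, add_assoc]

lemma minimalPeriod_eq_of_not_isPeriodicPt_properDivisors {α : Type*} {f : α → α} {x : α}
    {N : ℕ} (hN : 0 < N) (hx : IsPeriodicPt f N x)
    (hd : ∀ d ∈ N.properDivisors, ¬ IsPeriodicPt f d x) : minimalPeriod f x = N := by
  have hdvd := hx.minimalPeriod_dvd
  by_contra hne
  exact hd _ (Nat.mem_properDivisors.2 ⟨hdvd, (Nat.le_of_dvd hN hdvd).lt_of_ne hne⟩)
    (isPeriodicPt_minimalPeriod f x)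

lemma isPeriodicPt_pow_iff {M : Type*} [Monoid M] {k d : ℕ} {x : M} :
    IsPeriodicPt (· ^ k) d x ↔ x ^ k ^ d = x := by
  rw [IsPeriodicPt, IsFixedPt, pow_iterate]

lemma Nat.dvd_or_exists_eq_two_mul_of_dvd_two_mul {d n : ℕ} (h : d ∣ 2 * n) :
    d ∣ n ∨ ∃ e t, d = 2 * e ∧ n = e * (2 * t + 1) := by
  rcases Nat.even_or_odd d with ⟨e, rfl⟩ | hodd
  · obtain ⟨t, rfl⟩ : e ∣ n := by
      rw [← two_mul] at h
      exact Nat.dvd_of_mul_dvd_mul_left two_pos h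
    rcases Nat.even_or_odd t with ⟨s, rfl⟩ | ⟨s, rfl⟩
    · exact Or.inl ⟨s, by ring⟩
    · exact Or.inr ⟨e, s, by ring, rfl⟩
  · exact Or.inl (hodd.coprime_two_right.dvd_of_dvd_mul_left h)

lemma four_mul_sum_Ico_pow_add_le {q n : ℕ} (hq : 5 ≤ q) (hn : 1 ≤ n) :
    4 * ∑ d ∈ Ico 1 n, q ^ d + q ≤ q ^ n := by
  induction n, hn using Nat.le_induction with
  | base => simp
  | succ n hn ih =>
    rw [sum_Ico_succ_top hn, pow_succ]
    linarith [Nat.mul_le_mul_left (q ^ n) hq]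

lemma two_mul_pow_add_sum_properDivisors_lt {q n : ℕ} (hq : 5 ≤ q) (hn : 1 ≤ n) :
    2 * q ^ (n - 1) + (2 + ∑ e ∈ n.properDivisors, (q ^ e + 1)) < q ^ n + 1 := by
  have hsum : ∑ e ∈ n.properDivisors, (q ^ e + 1) ≤ 2 * ∑ d ∈ Ico 1 n, q ^ d := by
    rw [mul_sum]
    calc ∑ e ∈ n.properDivisors, (q ^ e + 1)
        ≤ ∑ e ∈ n.properDivisors, 2 * q ^ e :=
          sum_le_sum fun e _ => by linarith [Nat.one_le_pow e q (by omega)]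
      _ ≤ ∑ e ∈ Ico 1 n, 2 * q ^ e := sum_le_sum_of_subset (filter_subset _ _)
  have hpow : q ^ n = q * q ^ (n - 1) := by rw [← pow_succ']; congr; omega
  have := four_mul_sum_Ico_pow_add_le hq hn
  have := Nat.mul_le_mul_right (q ^ (n - 1)) hq
  omega

lemma sum_range_two_mul_pow (k n : ℕ) :
    ∑ i ∈ range (2 * n), k ^ i = (k ^ n + 1) * ∑ i ∈ range n, k ^ i := by
  rw [two_mul, sum_range_add, add_mul, one_mul, mul_sum]
  simp only [pow_add, add_comm]

section GroupWithZero

variable {G : Type*} [GroupWithZero G] {k n : ℕ} {x : G}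

lemma isPeriodicPt_pow_two_mul (hx : x ^ k ^ n = x⁻¹) : IsPeriodicPt (· ^ k) (2 * n) x := by
  rw [isPeriodicPt_pow_iff, two_mul, pow_add, pow_mul, hx, inv_pow, hx, inv_inv]

lemma sq_eq_one_or_exists_pow_add_one_eq_one (hx0 : x ≠ 0) (hx : x ^ k ^ n = x⁻¹) {d : ℕ}
    (hd : d ∈ (2 * n).properDivisors) (hper : IsPeriodicPt (· ^ k) d x) :
    x ^ 2 = 1 ∨ ∃ e ∈ n.properDivisors, x ^ (k ^ e + 1) = 1 := by
  rw [Nat.mem_properDivisors] at hd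
  rcases Nat.dvd_or_exists_eq_two_mul_of_dvd_two_mul hd.1 with hdn | ⟨e, t, rfl, rfl⟩
  · left
    have hfix := isPeriodicPt_pow_iff.1 (hper.trans_dvd hdn)
    rw [sq, ← inv_mul_cancel₀ hx0, ← hx, hfix]
  · right
    refine ⟨e, Nat.mem_properDivisors.2 ⟨dvd_mul_right _ _, by nlinarith [hd.2]⟩, ?_⟩
    have hconj : x ^ k ^ e = x⁻¹ := by
      rw [← hx, show e * (2 * t + 1) = e + 2 * e * t by ring, pow_add, mul_comm, pow_mul,
        isPeriodicPt_pow_iff.1 (hper.mul_const t)]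
    rw [pow_succ, hconj, inv_mul_cancel₀ hx0]

end GroupWithZero

lemma reverse_minpoly_eq_self {K L : Type*} [Field K] [Field L] [Algebra K L] {α : L}
    (hα : IsIntegral K α) (h0 : (minpoly K α).coeff 0 = 1)
    (hinv : aeval α⁻¹ (minpoly K α) = 0) :
    (minpoly K α).reverse = minpoly K α := by
  have hα0 : α ≠ 0 := by
    rintro rfl
    simp [minpoly.zero] at h0
  have hmonic : (minpoly K α).reverse.Monic := by
    rw [Monic, reverse_leadingCoeff, trailingCoeff_eq_coeff_zero (h0 ▸ one_ne_zero), h0]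
  have hroot : aeval α (minpoly K α).reverse = 0 := by
    let := invertibleOfNonzero (inv_ne_zero hα0)
    simpa [aeval_def] using (eval₂_reverse_eq_zero_iff (algebraMap K L) α⁻¹ _).2 hinv
  exact eq_of_monic_of_dvd_of_natDegree_le (minpoly.monic hα) hmonic (minpoly.dvd K α hroot)
    (reverse_natDegree_le _)

lemma card_nthRootsFinset_le {R : Type*} [CommRing R] [IsDomain R] (n : ℕ) (a : R) :
    #(nthRootsFinset n a) ≤ n := by
  classical
  rw [nthRootsFinset_def]
  exact (Multiset.toFinset_card_le _).trans (card_nthRoots n a)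

lemma card_filter_eval_add_inv_eq_zero_le {F : Type*} [Field F] [DecidableEq F] {s : Finset F}
    (hs : 0 ∉ s) {P : F[X]} (hP : P ≠ 0) :
    #{x ∈ s | P.eval (x + x⁻¹) = 0} ≤ 2 * P.natDegree := by
  set t := {x ∈ s | P.eval (x + x⁻¹) = 0}
  have himage : #(t.image fun x => x + x⁻¹) ≤ P.natDegree := by
    refine (card_le_card fun b hb => ?_).trans ((Multiset.toFinset_card_le _).trans P.card_roots')
    obtain ⟨x, hx, rfl⟩ := mem_image.1 hb
    simp [mem_roots hP, (mem_filter.1 hx).2]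
  have hfiber : ∀ b ∈ t.image fun x => x + x⁻¹, #{x ∈ t | x + x⁻¹ = b} ≤ 2 := by
    intro b _
    have hQ : (X ^ 2 - C b * X + 1 : F[X]).natDegree = 2 := by compute_degree!
    have hQ0 : (X ^ 2 - C b * X + 1 : F[X]) ≠ 0 := fun h => by simp [h] at hQ
    rw [← hQ]
    refine (card_le_card fun x hx => ?_).trans
      ((Multiset.toFinset_card_le _).trans (card_roots' _))
    obtain ⟨hxt, rfl⟩ := mem_filter.1 hx
    have hx0 : x ≠ 0 := fun h => hs (h ▸ (mem_filter.1 hxt).1)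
    simp only [Multiset.mem_toFinset, mem_roots hQ0, IsRoot, eval_add, eval_sub, eval_mul,
      eval_pow, eval_X, eval_C, eval_one]
    field_simp
    ring
  calc #t ≤ 2 * #(t.image fun x => x + x⁻¹) := card_le_mul_card_image t 2 hfiber
    _ ≤ 2 * P.natDegree := by omega

lemma pow_pow_eq_inv_of_mem_nthRootsFinset {F : Type*} [Field F] {k n : ℕ} {x : F}
    (hx : x ∈ nthRootsFinset (k ^ n + 1) (1 : F)) : x ^ k ^ n = x⁻¹ :=
  eq_inv_of_mul_eq_one_left (by rw [← pow_succ]; exact (mem_nthRootsFinset (by omega) 1).1 hx)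

lemma card_filter_exists_isPeriodicPt_properDivisors_le {F : Type*} [Field F] [DecidableEq F]
    (k n : ℕ) :
    #{x ∈ nthRootsFinset (k ^ n + 1) (1 : F) |
        ∃ d ∈ (2 * n).properDivisors, IsPeriodicPt (· ^ k) d x} ≤
      2 + ∑ e ∈ n.properDivisors, (k ^ e + 1) := by
  calc _ ≤ #(nthRootsFinset 2 (1 : F) ∪
          n.properDivisors.biUnion fun e => nthRootsFinset (k ^ e + 1) (1 : F)) := by
        refine card_le_card fun x hx => ?_
        obtain ⟨hxU, d, hd, hper⟩ := mem_filter.1 hx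
        rcases sq_eq_one_or_exists_pow_add_one_eq_one
          (ne_zero_of_mem_nthRootsFinset one_ne_zero hxU)
          (pow_pow_eq_inv_of_mem_nthRootsFinset hxU) hd hper with h | ⟨e, he, h⟩
        · exact mem_union_left _ ((mem_nthRootsFinset two_pos _).2 h)
        · exact mem_union_right _
            (mem_biUnion.2 ⟨e, he, (mem_nthRootsFinset (Nat.succ_pos _) _).2 h⟩)
    _ ≤ 2 + ∑ e ∈ n.properDivisors, (k ^ e + 1) :=
        (card_union_le _ _).trans (add_le_add (card_nthRootsFinset_le _ _)
          (card_biUnion_le.trans (sum_le_sum fun e _ => card_nthRootsFinset_le _ _)))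

section FiniteField

variable (K : Type*) {L : Type*} [Field K] [Fintype K] [Field L] [Algebra K L]

local notation "q" => Fintype.card K

lemma frobeniusAlgHom_pow_apply (i : ℕ) (x : L) :
    (FiniteField.frobeniusAlgHom K L ^ i) x = x ^ q ^ i := by
  rw [AlgHom.coe_pow, FiniteField.coe_frobeniusAlgHom, pow_iterate]

lemma add_pow_card_pow (x y : L) (i : ℕ) : (x + y) ^ q ^ i = x ^ q ^ i + y ^ q ^ i := by
  simpa only [frobeniusAlgHom_pow_apply] using map_add (FiniteField.frobeniusAlgHom K L ^ i) x y

lemma mem_range_algebraMap_of_pow_card_eq_self {x : L} (hx : x ^ q = x) :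
    x ∈ Set.range (algebraMap K L) := by
  classical
  have hq : 1 < q := Fintype.one_lt_card
  have hroots : (X ^ q - X : L[X]).roots = (univ.image (algebraMap K L)).val := by
    refine roots_eq_of_natDegree_le_card_of_ne_zero (fun y hy => ?_) ?_
      (FiniteField.X_pow_card_sub_X_ne_zero L hq)
    · obtain ⟨a, -, rfl⟩ := mem_image.1 hy
      simp [← map_pow, FiniteField.pow_card]
    · rw [FiniteField.X_pow_card_sub_X_natDegree_eq L hq,
        card_image_of_injective _ (algebraMap K L).injective, card_univ]
  have hx_root : x ∈ (X ^ q - X : L[X]).roots := by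
    simp [mem_roots (FiniteField.X_pow_card_sub_X_ne_zero L hq), hx]
  rw [hroots] at hx_root
  obtain ⟨a, -, ha⟩ := mem_image.1 hx_root
  exact ⟨a, ha⟩

lemma isIntegral_of_minimalPeriod_pos {α : L} (hα : 0 < minimalPeriod (· ^ q) α) :
    IsIntegral K α := by
  have hq : 1 < q ^ minimalPeriod (· ^ q) α := Nat.one_lt_pow hα.ne' Fintype.one_lt_card
  refine ⟨X ^ q ^ minimalPeriod (· ^ q) α - X,
    monic_X_pow_sub (by rw [degree_X]; exact_mod_cast hq), ?_⟩
  simp [eval₂_X_pow, isPeriodicPt_pow_iff.1 (isPeriodicPt_minimalPeriod _ α)]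

lemma aeval_pow_card_pow_minpoly (α : L) (i : ℕ) : aeval (α ^ q ^ i) (minpoly K α) = 0 := by
  rw [← frobeniusAlgHom_pow_apply, aeval_algHom_apply, minpoly.aeval, map_zero]

lemma prod_X_sub_C_pow_card_pow_mem_lifts (α : L) :
    ∏ i ∈ range (minimalPeriod (· ^ q) α), (X - C (α ^ q ^ i)) ∈
      lifts (algebraMap K L) := by
  set F := ∏ i ∈ range (minimalPeriod (· ^ q) α), (X - C (α ^ q ^ i))
  have hperiodic : Periodic (fun i => X - C (α ^ q ^ i)) (minimalPeriod (· ^ q) α) := fun i => by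
    have := iterate_add_minimalPeriod_eq (f := (· ^ q)) (x := α) (n := i)
    simp only [pow_iterate] at this
    simp only [this]
  have hfrob : F.map (FiniteField.frobeniusAlgHom K L : L →+* L) = F := by
    simp only [F, Polynomial.map_prod, Polynomial.map_sub, map_X, map_C, RingHom.coe_coe,
      FiniteField.coe_frobeniusAlgHom, ← pow_mul, ← pow_succ]
    exact hperiodic.prod_range_add 1
  refine (lifts_iff_coeff_lifts _).2 fun j => mem_range_algebraMap_of_pow_card_eq_self K ?_
  simpa using congrArg (coeff · j) hfrob

lemma map_minpoly_eq_prod_X_sub_C_pow_card_pow {α : L} (hα : 0 < minimalPeriod (· ^ q) α) :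
    (minpoly K α).map (algebraMap K L) =
      ∏ i ∈ range (minimalPeriod (· ^ q) α), (X - C (α ^ q ^ i)) := by
  classical
  obtain ⟨f, hf_map, hf_deg, hf_monic⟩ := lifts_and_natDegree_eq_and_monic
    (prod_X_sub_C_pow_card_pow_mem_lifts K α) (monic_prod_X_sub_C _ _)
  have hroot : aeval α f = 0 := by
    rw [aeval_def, ← eval_map, hf_map, eval_prod]
    exact prod_eq_zero (mem_range.2 hα) (by simp)
  have hint := isIntegral_of_minimalPeriod_pos K hα
  have hdeg : minimalPeriod (· ^ q) α ≤ (minpoly K α).natDegree := by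
    rw [← natDegree_map (algebraMap K L)]
    have hinj := iterate_injOn_Iio_minimalPeriod (f := (· ^ q)) (x := α)
    simp only [pow_iterate] at hinj
    rw [← card_range (minimalPeriod (· ^ q) α),
      ← card_image_of_injOn (fun i hi j hj => hinj (by simpa using hi) (by simpa using hj))]
    refine card_le_degree_of_subset_roots fun x hx => ?_
    obtain ⟨i, -, rfl⟩ : ∃ i < minimalPeriod (· ^ q) α, α ^ q ^ i = x := by simpa using hx
    rw [mem_roots (map_ne_zero (minpoly.ne_zero hint)), IsRoot, eval_map, ← aeval_def,
      aeval_pow_card_pow_minpoly K]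
  rw [← hf_map, eq_of_monic_of_dvd_of_natDegree_le (minpoly.monic hint) hf_monic
    (minpoly.dvd K α hroot)
    (by rwa [hf_deg, natDegree_finsetProd_X_sub_C_eq_card, card_range])]


lemma sum_range_two_mul_pow_card_pow_eq_eval {x : L} {n : ℕ} (hx : x ^ q ^ n = x⁻¹) :
    ∑ i ∈ range (2 * n), x ^ q ^ i =
      (∑ i ∈ range n, (X : L[X]) ^ q ^ i).eval (x + x⁻¹) := by
  rw [two_mul, sum_range_add, eval_finsetSum, ← sum_add_distrib]
  refine sum_congr rfl fun i _ => ?_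
  rw [eval_pow, eval_X, add_pow_card_pow K, ← hx, ← pow_mul, ← pow_add]

lemma card_filter_sum_pow_card_pow_eq_zero_le [DecidableEq L] {n : ℕ} (hn : 1 ≤ n) :
    #{x ∈ nthRootsFinset (q ^ n + 1) (1 : L) | ∑ i ∈ range (2 * n), x ^ q ^ i = 0} ≤
      2 * q ^ (n - 1) := by
  set P := ∑ i ∈ range n, (X : L[X]) ^ q ^ i
  have hq : 1 < q := Fintype.one_lt_card
  have hP : P ≠ 0 := fun h => by
    have h1 := congrArg (coeff · 1) h
    simp only [P, finsetSum_coeff, coeff_zero] at h1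
    rw [sum_eq_single_of_mem 0 (mem_range.2 hn) fun i _ hi => by
      rw [coeff_X_pow, if_neg (Nat.one_lt_pow hi hq).ne]] at h1
    simp at h1
  have hPdeg : P.natDegree ≤ q ^ (n - 1) := natDegree_sum_le_of_forall_le _ _ fun i hi => by
    rw [natDegree_X_pow]
    exact Nat.pow_le_pow_right hq.le (by simp at hi; omega)
  calc _ = #{x ∈ nthRootsFinset (q ^ n + 1) (1 : L) | P.eval (x + x⁻¹) = 0} := by
        congr 1
        refine filter_congr fun x hx => ?_
        rw [sum_range_two_mul_pow_card_pow_eq_eval K (pow_pow_eq_inv_of_mem_nthRootsFinset hx)]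
    _ ≤ 2 * P.natDegree := card_filter_eval_add_inv_eq_zero_le
        (fun h => ne_zero_of_mem_nthRootsFinset one_ne_zero h rfl) hP
    _ ≤ 2 * q ^ (n - 1) := by omega

lemma exists_mem_nthRootsFinset_minimalPeriod_eq_and_sum_ne_zero {n : ℕ} (hq : 5 ≤ q)
    (hn : 1 ≤ n) (hU : #(nthRootsFinset (q ^ n + 1) (1 : L)) = q ^ n + 1) :
    ∃ α ∈ nthRootsFinset (q ^ n + 1) (1 : L),
      minimalPeriod (· ^ q) α = 2 * n ∧ ∑ i ∈ range (2 * n), α ^ q ^ i ≠ 0 := by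
  classical
  set U := nthRootsFinset (q ^ n + 1) (1 : L)
  obtain ⟨α, hαU, hα⟩ := exists_mem_notMem_of_card_lt_card
    (s := {x ∈ U | ∑ i ∈ range (2 * n), x ^ q ^ i = 0} ∪
      {x ∈ U | ∃ d ∈ (2 * n).properDivisors, IsPeriodicPt (· ^ q) d x}) (t := U) <| by
    calc _ ≤ _ := card_union_le _ _
      _ ≤ 2 * q ^ (n - 1) + (2 + ∑ e ∈ n.properDivisors, (q ^ e + 1)) :=
          add_le_add (card_filter_sum_pow_card_pow_eq_zero_le K hn)
            (card_filter_exists_isPeriodicPt_properDivisors_le _ _)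
      _ < #U := hU ▸ two_mul_pow_add_sum_properDivisors_lt hq hn
  simp only [mem_union, mem_filter, not_or, not_and] at hα
  refine ⟨α, hαU, minimalPeriod_eq_of_not_isPeriodicPt_properDivisors (by omega)
    (isPeriodicPt_pow_two_mul (pow_pow_eq_inv_of_mem_nthRootsFinset hαU))
    (fun d hd h => hα.2 hαU ⟨d, hd, h⟩), hα.1 hαU⟩

lemma natDegree_minpoly_eq_minimalPeriod {α : L} (hα : 0 < minimalPeriod (· ^ q) α) :
    (minpoly K α).natDegree = minimalPeriod (· ^ q) α := by
  rw [← natDegree_map (algebraMap K L), map_minpoly_eq_prod_X_sub_C_pow_card_pow K hα,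
    natDegree_finsetProd_X_sub_C_eq_card, card_range]

lemma algebraMap_coeff_zero_minpoly {α : L} (hα : 0 < minimalPeriod (· ^ q) α) :
    algebraMap K L ((minpoly K α).coeff 0) =
      (-1) ^ minimalPeriod (· ^ q) α *
        α ^ ∑ i ∈ range (minimalPeriod (· ^ q) α), q ^ i := by
  rw [← coeff_map, map_minpoly_eq_prod_X_sub_C_pow_card_pow K hα, coeff_zero_eq_eval_zero,
    ← prod_pow_eq_pow_sum]
  simp only [eval_prod, eval_sub, eval_X, eval_C, zero_sub, neg_eq_neg_one_mul (α ^ _),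
    prod_mul_distrib, prod_const, card_range]

lemma algebraMap_coeff_pred_minpoly {α : L} (hα : 0 < minimalPeriod (· ^ q) α) :
    algebraMap K L ((minpoly K α).coeff (minimalPeriod (· ^ q) α - 1)) =
      -∑ i ∈ range (minimalPeriod (· ^ q) α), α ^ q ^ i := by
  have h := prod_X_sub_C_coeff_card_pred (range (minimalPeriod (· ^ q) α)) (fun i => α ^ q ^ i)
    (by simpa using hα)
  rwa [card_range, ← map_minpoly_eq_prod_X_sub_C_pow_card_pow K hα, coeff_map] at h

lemma coeff_zero_minpoly_eq_one {n : ℕ} {α : L}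
    (hαU : α ∈ nthRootsFinset (q ^ n + 1) (1 : L)) (hper : minimalPeriod (· ^ q) α = 2 * n)
    (hn : 1 ≤ n) : (minpoly K α).coeff 0 = 1 := by
  apply (algebraMap K L).injective
  rw [algebraMap_coeff_zero_minpoly K (by omega), hper, sum_range_two_mul_pow, pow_mul, pow_mul,
    (mem_nthRootsFinset (by omega) 1).1 hαU]
  simp

lemma reverse_minpoly_eq_self_of_mem_nthRootsFinset {n : ℕ} {α : L}
    (hαU : α ∈ nthRootsFinset (q ^ n + 1) (1 : L)) (hper : minimalPeriod (· ^ q) α = 2 * n)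
    (hn : 1 ≤ n) : (minpoly K α).reverse = minpoly K α := by
  refine reverse_minpoly_eq_self (isIntegral_of_minimalPeriod_pos K (by omega))
    (coeff_zero_minpoly_eq_one K hαU hper hn) ?_
  rw [← pow_pow_eq_inv_of_mem_nthRootsFinset hαU]
  exact aeval_pow_card_pow_minpoly K α n

end FiniteField

theorem stmt9_general {K : Type} [Field K] [Fintype K] {p r n : ℕ}
    (hcard : Fintype.card K = p ^ r) (hn : 1 ≤ n) (h5 : 5 ≤ p ^ r) :
    ∃ f : K[X], f.Monic ∧ Irreducible f ∧ f.natDegree = 2 * n ∧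
      (∀ i, 1 ≤ i → i ≤ n → f.coeff i = f.coeff (2 * n - i)) ∧ f.coeff 0 = 1 ∧
      f.coeff (2 * n - 1) ≠ 0 := by
  have hq : 5 ≤ Fintype.card K := hcard ▸ h5
  set q := Fintype.card K
  -- `q ^ n + 1 = 1` in `K`, so `L` contains a primitive `(q ^ n + 1)`-th root of unity
  have : NeZero ((q ^ n + 1 : ℕ) : K) := ⟨by simp [q, zero_pow (by omega : n ≠ 0)]⟩
  let L := CyclotomicField (q ^ n + 1) K
  obtain ⟨α, hαU, hper, htrace⟩ :=
    exists_mem_nthRootsFinset_minimalPeriod_eq_and_sum_ne_zero K hq hn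
      (IsCyclotomicExtension.zeta_spec (q ^ n + 1) K L).card_nthRootsFinset
  have hpos : 0 < minimalPeriod (· ^ q) α := by rw [hper]; omega
  have hint := isIntegral_of_minimalPeriod_pos K hpos
  have hdeg : (minpoly K α).natDegree = 2 * n := hper ▸ natDegree_minpoly_eq_minimalPeriod K hpos
  refine ⟨minpoly K α, minpoly.monic hint, minpoly.irreducible hint, hdeg, fun i _ hi => ?_,
    coeff_zero_minpoly_eq_one K hαU hper hn, fun h => htrace ?_⟩
  · conv_lhs => rw [← reverse_minpoly_eq_self_of_mem_nthRootsFinset K hαU hper hn]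
    rw [coeff_reverse, hdeg, revAt_le (by omega)]
  · have h' := algebraMap_coeff_pred_minpoly K hpos
    rwa [hper, h, map_zero, zero_eq_neg] at h'

/-- For `n ≥ 1`, a prime `p ∤ n`, and `p^r ≥ 5`, there is a monic irreducible symplectic
polynomial of degree `2n` over the field with `p^r` elements whose coefficient of
`x^(2n-1)` is nonzero. -/
theorem stmt9 {K : Type} [Field K] [Fintype K] {p r n : ℕ} (hp : p.Prime) [CharP K p]
    (hcard : Fintype.card K = p ^ r) (hn : 1 ≤ n) (hpn : ¬ p ∣ n) (h5 : 5 ≤ p ^ r) :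
    ∃ f : K[X], f.Monic ∧ Irreducible f ∧ f.natDegree = 2 * n ∧
      (∀ i, 1 ≤ i → i ≤ n → f.coeff i = f.coeff (2 * n - i)) ∧ f.coeff 0 = 1 ∧
      f.coeff (2 * n - 1) ≠ 0 :=
  stmt9_general hcard hn h5
end

section
/- Let V be a finite-dimensional vector space over a field, g ∈ GL(V) an element acting irreducibly on V, and suppose V = S_1 ⊕ ... ⊕ S_h is a decomposition into h ≥ 2 nonzero subspaces such that g permutes the subspaces S_i (i.e., for each i there is j with g(S_i) ⊆ S_j). Then the trace of g is zero. -/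
/-- If `g ∈ GL(V)` acts irreducibly on a finite-dimensional vector space `V` and permutes
the summands of a direct sum decomposition `V = S₁ ⊕ ⋯ ⊕ S_h` into `h ≥ 2` nonzero
subspaces, then the trace of `g` is zero. -/
theorem stmt12 {k : Type} [Field k] {V : Type} [AddCommGroup V] [Module k V]
    [FiniteDimensional k V] (g : V ≃ₗ[k] V)
    (hirr : ∀ W : Submodule k V, (∀ v ∈ W, g v ∈ W) → W = ⊥ ∨ W = ⊤)
    {h : ℕ} (hh : 2 ≤ h) (S : Fin h → Submodule k V) (hS0 : ∀ i, S i ≠ ⊥)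
    (hdsum : DirectSum.IsInternal S)
    (hperm : ∀ i, ∃ j, ∀ v ∈ S i, g v ∈ S j) :
    LinearMap.trace k V (g : V →ₗ[k] V) = 0 := by
  choose σ hσmap using hperm
  have hσ : ∀ i, σ i ≠ i := by
    intro i hfix
    have hstab : ∀ v ∈ S i, g v ∈ S i := by
      intro v hv
      simpa [hfix] using hσmap i v hv
    rcases hirr (S i) hstab with hbot | htop
    · exact hS0 i hbot
    · -- S i = ⊤, but there is another nonzero summand, contradicting independence
      obtain ⟨j, hj⟩ : ∃ j : Fin h, j ≠ i := by
        refine if hi : i = ⟨0, by omega⟩ then ⟨⟨1, by omega⟩, ?_⟩ else ⟨⟨0, by omega⟩, Ne.symm hi⟩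
        rw [hi]; simp [Fin.ext_iff]
      have hind := hdsum.submodule_iSupIndep
      have hdisj := hind j
      have hle : S i ≤ ⨆ (l : Fin h) (_ : l ≠ j), S l :=
        le_iSup_of_le i (le_iSup_of_le (Ne.symm hj) le_rfl)
      have : S j = ⊥ := by
        have h2 : Disjoint (S j) (S i) := hdisj.mono_right hle
        rw [htop] at h2
        simpa using h2
      exact hS0 j this
  exact LinearMap.trace_eq_zero_of_mapsTo_ne hdsum σ hσ hσmap
end

section
/- Let q ≥ 5 be a prime power whose characteristic p does not divide n. Then the number of elements α in F_{q^n} that generate F_{q^n} over F_q, have nonzero trace to F_q, and for which x² - αx + 1 is irreducible over F_{q^n}, is at least ((q-1)/q)·Σ_{d|n} μ(d) q^{n/d} - (q^n + 1)/2, and in particular is positive. -/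
/-!
Write `q = #K` and `n = [L : K]`. For `m ∣ n` the elements of `L` with `α ^ q ^ m = α` are the
`q ^ m` roots of `X ^ q ^ m - X`, and they are exactly the `α` with `[K(α) : K] ∣ m`; Möbius
inversion then counts the generators as `∑_{d ∣ n} μ(d) q^(n/d)`. Translating `α` by `t ∈ K`
preserves generators and adds `n t` to the trace, so when `p ∤ n` all trace fibres of the
generators have the same size and a fraction `(q - 1)/q` of them has nonzero trace. Finally
`X² - αX + 1` is reducible iff `α = x + x⁻¹` with `x ≠ 0`; as `x` and `x⁻¹` give the same `α`,
at most `(q^n + 1)/2` values of `α` are lost. Positivity follows from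
`∑_{d ∣ n} μ(d) q^(n/d) ≥ q^n - (q^n - 1)/(q - 1)` once `q ≥ 5`.
-/

open Polynomial ArithmeticFunction

open Finset IntermediateField Module

section Generators

variable {K L : Type*} [Field K] [Fintype K] [Field L] [Fintype L] [Algebra K L]

theorem pow_card_pow_eq_self_iff_finrank_adjoin_dvd (α : L) (m : ℕ) :
    α ^ Fintype.card K ^ m = α ↔ finrank K K⟮α⟯ ∣ m := by
  have hα := Algebra.IsIntegral.isIntegral (R := K) α
  rw [adjoin.finrank hα, (minpoly.irreducible hα).natDegree_dvd_iff_dvd_X_pow_card_pow_sub_X,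
    minpoly.dvd_iff, Nat.card_eq_fintype_card]
  simp [sub_eq_zero]

theorem card_filter_pow_card_pow_eq_self [DecidableEq L] {m : ℕ} (hm : m ∣ finrank K L) :
    #{x : L | x ^ Fintype.card K ^ m = x} = Fintype.card K ^ m := by
  set P : L[X] := X ^ Fintype.card K ^ m - X
  have hdvd : P ∣ X ^ Fintype.card L - X :=
    Module.card_eq_pow_finrank (K := K) (V := L) ▸ dvd_pow_pow_sub_self_of_dvd hm
  have hne : (X ^ Fintype.card L - X : L[X]) ≠ 0 :=
    FiniteField.X_pow_card_sub_X_ne_zero L Fintype.one_lt_card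
  have hsplit : P.Splits := by
    refine Splits.of_dvd (splits_iff_card_roots.2 ?_) hne hdvd
    rw [FiniteField.roots_X_pow_card_sub_X,
      FiniteField.X_pow_card_sub_X_natDegree_eq L Fintype.one_lt_card]
    rfl
  have hnodup : P.roots.Nodup :=
    Multiset.nodup_of_le (roots.le_of_dvd hne hdvd)
      (FiniteField.roots_X_pow_card_sub_X L ▸ univ.nodup)
  have hroots : P.roots.toFinset = ({x : L | x ^ Fintype.card K ^ m = x} : Finset L) := by
    ext x
    simp [P, mem_roots (ne_zero_of_dvd_ne_zero hne hdvd), sub_eq_zero]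
  rw [← hroots, Multiset.toFinset_card_of_nodup hnodup, ← hsplit.natDegree_eq_card_roots]
  exact FiniteField.X_pow_card_pow_sub_X_natDegree_eq L
    (Nat.pos_of_dvd_of_pos hm finrank_pos).ne' Fintype.one_lt_card

theorem sum_card_filter_finrank_adjoin_eq_pow {m : ℕ} (hm : m ∣ finrank K L) :
    ∑ d ∈ m.divisors, #{α : L | finrank K K⟮α⟯ = d} = Fintype.card K ^ m := by
  classical
  have hm0 : m ≠ 0 := (Nat.pos_of_dvd_of_pos hm finrank_pos).ne'
  rw [← card_filter_pow_card_pow_eq_self hm,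
    card_eq_sum_card_fiberwise (f := fun α => finrank K K⟮α⟯) (t := m.divisors) fun α hα => by
      simpa [pow_card_pow_eq_self_iff_finrank_adjoin_dvd, hm0] using hα]
  refine sum_congr rfl fun d hd => ?_
  rw [filter_filter]
  refine congrArg card (filter_congr fun α _ => ?_)
  rw [pow_card_pow_eq_self_iff_finrank_adjoin_dvd]
  exact ⟨fun h => ⟨h ▸ Nat.dvd_of_mem_divisors hd, h⟩, And.right⟩

open scoped Classical in
theorem card_filter_adjoin_eq_top (R : Type*) [CommRing R] :
    (#{α : L | K⟮α⟯ = ⊤} : R) = ∑ d ∈ (finrank K L).divisors,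
      (moebius d : R) * (Fintype.card K : R) ^ (finrank K L / d) := by
  have inversion := (sum_eq_iff_sum_mul_moebius_eq_on
    (f := fun d => (#{α : L | finrank K K⟮α⟯ = d} : R)) (g := fun m => (Fintype.card K : R) ^ m)
    {m | m ∣ finrank K L} fun _ _ h h' => h.trans h').1
    (fun m _ hm => by
      simpa using congrArg (Nat.cast : ℕ → R) (sum_card_filter_finrank_adjoin_eq_pow hm))
    _ finrank_pos dvd_rfl
  rw [Nat.sum_divisorsAntidiagonal fun a b => (moebius a : R) * (Fintype.card K : R) ^ b]
    at inversion
  rw [inversion]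
  congr 2
  exact filter_congr fun α _ => by rw [eq_iff_finrank_eq_of_le le_top, finrank_top']

end Generators

theorem IntermediateField.adjoin_simple_add_algebraMap {K L : Type*} [Field K] [Field L]
    [Algebra K L] (α : L) (t : K) : K⟮α + algebraMap K L t⟯ = K⟮α⟯ := by
  refine le_antisymm (adjoin_simple_le_iff.2 ?_) (adjoin_simple_le_iff.2 ?_)
  · exact add_mem (mem_adjoin_simple_self K α) (algebraMap_mem _ t)
  · simpa using sub_mem (mem_adjoin_simple_self K (α + algebraMap K L t)) (algebraMap_mem _ t)

section Trace

variable {K L : Type*} [Field K] [DecidableEq K] [Field L] [Fintype L] [Algebra K L]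
  {P : L → Prop} [DecidablePred P]

theorem card_filter_trace_eq_of_forall_add_algebraMap
    (hP : ∀ α t, P (α + algebraMap K L t) ↔ P α) (hn : (finrank K L : K) ≠ 0) (c c' : K) :
    #{α | P α ∧ Algebra.trace K L α = c} = #{α | P α ∧ Algebra.trace K L α = c'} := by
  refine card_equiv (Equiv.addRight (algebraMap K L ((c' - c) / finrank K L))) fun α => ?_
  simp only [mem_filter, mem_univ, true_and, Equiv.coe_addRight, hP, map_add,
    Algebra.trace_algebraMap, nsmul_eq_mul, mul_div_cancel₀ _ hn]
  exact and_congr_right fun _ => by constructor <;> intro h <;> linear_combination h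

theorem card_mul_card_filter_trace_ne_zero [Fintype K]
    (hP : ∀ α t, P (α + algebraMap K L t) ↔ P α) (hn : (finrank K L : K) ≠ 0) :
    Fintype.card K * #{α | P α ∧ Algebra.trace K L α ≠ 0} =
      (Fintype.card K - 1) * #{α | P α} := by
  set z := #{α | P α ∧ Algebra.trace K L α = 0}
  have hfibres : #{α | P α} = Fintype.card K * z := by
    rw [card_eq_sum_card_fiberwise (f := Algebra.trace K L) (t := univ) fun _ _ => mem_univ _]
    simp_rw [filter_filter, card_filter_trace_eq_of_forall_add_algebraMap hP hn _ 0, sum_const,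
      card_univ, smul_eq_mul]
    rfl
  have hsplit : z + #{α | P α ∧ Algebra.trace K L α ≠ 0} = #{α | P α} := by
    rw [← card_filter_add_card_filter_not (s := filter P univ) (Algebra.trace K L · = 0),
      filter_filter, filter_filter]
  have hne : #{α | P α ∧ Algebra.trace K L α ≠ 0} = (Fintype.card K - 1) * z := by
    rw [Nat.sub_one_mul]
    omega
  rw [hne, hfibres]
  ring

end Trace

theorem Finset.two_mul_card_image_le_card_add_card {α β : Type*} [DecidableEq β] {f : α → β}
    {s : Finset α} (E : Finset β) (h : ∀ a ∈ s, f a ∉ E → ∃ a' ∈ s, a' ≠ a ∧ f a' = f a) :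
    2 * #(s.image f) ≤ #s + #E := by
  have hfibre : ∀ b ∈ s.image f, 2 ≤ #{a ∈ s | f a = b} + if b ∈ E then 1 else 0 := by
    intro b hb
    obtain ⟨a, ha, rfl⟩ := mem_image.1 hb
    by_cases hE : f a ∈ E
    · have : 0 < #{a' ∈ s | f a' = f a} := card_pos.2 ⟨a, mem_filter.2 ⟨ha, rfl⟩⟩
      simp only [hE, if_true]
      omega
    · obtain ⟨a', ha', hne, hfa'⟩ := h a ha hE
      have : 1 < #{a' ∈ s | f a' = f a} :=
        one_lt_card.2 ⟨a', mem_filter.2 ⟨ha', hfa'⟩, a, mem_filter.2 ⟨ha, rfl⟩, hne⟩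
      simp only [hE, if_false]
      omega
  calc 2 * #(s.image f) = ∑ _b ∈ s.image f, 2 := by rw [sum_const, smul_eq_mul, mul_comm]
    _ ≤ ∑ b ∈ s.image f, (#{a ∈ s | f a = b} + if b ∈ E then 1 else 0) := sum_le_sum hfibre
    _ = #s + #{b ∈ s.image f | b ∈ E} := by
      rw [sum_add_distrib, ← card_eq_sum_card_image, sum_boole, Nat.cast_id]
    _ ≤ #s + #E := Nat.add_le_add_left (card_le_card fun b hb => (mem_filter.1 hb).2) _

theorem exists_add_inv_eq_of_not_irreducible {L : Type*} [Field L] {α : L}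
    (h : ¬ Irreducible (X ^ 2 - C α * X + 1 : L[X])) : ∃ x ≠ 0, x + x⁻¹ = α := by
  contrapose! h
  have hdeg : (X ^ 2 - C α * X + 1 : L[X]).natDegree = 2 := by compute_degree!
  refine irreducible_of_degree_le_three_of_not_isRoot (by simp [hdeg]) fun x hx => ?_
  have hx : x ^ 2 - α * x + 1 = 0 := by simpa using hx
  have hx0 : x ≠ 0 := by rintro rfl; simp at hx
  refine h x hx0 ?_
  field_simp
  linear_combination hx

open scoped Classical in
theorem two_mul_card_not_irreducible_le (L : Type*) [Field L] [Fintype L] :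
    2 * #{α : L | ¬ Irreducible (X ^ 2 - C α * X + 1 : L[X])} ≤ Fintype.card L + 1 := by
  set s : Finset L := {x | x ≠ 0}
  have hsub : ({α : L | ¬ Irreducible (X ^ 2 - C α * X + 1 : L[X])} : Finset L) ⊆
      s.image fun x => x + x⁻¹ := by
    intro α hα
    obtain ⟨x, hx0, hx⟩ := exists_add_inv_eq_of_not_irreducible (mem_filter.1 hα).2
    exact mem_image.2 ⟨x, by simpa [s] using hx0, hx⟩
  have hpair : ∀ x ∈ s, x + x⁻¹ ∉ ({2, -2} : Finset L) →
      ∃ y ∈ s, y ≠ x ∧ y + y⁻¹ = x + x⁻¹ := by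
    intro x hx hE
    have hx0 : x ≠ 0 := by simpa [s] using hx
    refine ⟨x⁻¹, by simpa [s] using hx0, fun hinv => hE ?_, by rw [inv_inv, add_comm]⟩
    have : (x - 1) * (x + 1) = 0 := by
      have := mul_inv_cancel₀ hx0
      rw [hinv] at this
      linear_combination this
    rcases mul_eq_zero.1 this with h | h
    · simp [show x = 1 by linear_combination h, one_add_one_eq_two]
    · simp [show x = -1 by linear_combination h, ← neg_add, one_add_one_eq_two]
  have hs : #s = Fintype.card L - 1 := by
    rw [show s = univ.erase 0 by ext; simp [s], card_erase_of_mem (mem_univ _), card_univ]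
  have hL : 0 < Fintype.card L := Fintype.card_pos
  calc 2 * #{α : L | ¬ Irreducible (X ^ 2 - C α * X + 1 : L[X])}
      ≤ 2 * #(s.image fun x => x + x⁻¹) := Nat.mul_le_mul_left 2 (card_le_card hsub)
    _ ≤ #s + #({2, -2} : Finset L) := two_mul_card_image_le_card_add_card _ hpair
    _ ≤ Fintype.card L + 1 := by
      have := card_le_two (a := (2 : L)) (b := -2)
      omega

section MoebiusBound

variable {R : Type*} [Field R] [LinearOrder R] [IsStrictOrderedRing R]

theorem sub_geom_sum_le_sum_moebius_mul_pow {x : R} (hx : 0 ≤ x) {n : ℕ} (hn : n ≠ 0) :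
    x ^ n - ∑ e ∈ range n, x ^ e ≤ ∑ d ∈ n.divisors, (moebius d : R) * x ^ (n / d) := by
  have hswap : ∑ d ∈ n.divisors, (moebius d : R) * x ^ (n / d) =
      ∑ d ∈ n.divisors, (moebius (n / d) : R) * x ^ d := by
    rw [← Nat.sum_div_divisors n fun e => (moebius (n / e) : R) * x ^ e]
    exact sum_congr rfl fun d hd => by rw [Nat.div_div_self (Nat.dvd_of_mem_divisors hd) hn]
  have hproper :
      -∑ e ∈ range n, x ^ e ≤ ∑ d ∈ n.properDivisors, (moebius (n / d) : R) * x ^ d := by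
    calc -∑ e ∈ range n, x ^ e ≤ -∑ d ∈ n.properDivisors, x ^ d := by
          refine neg_le_neg (sum_le_sum_of_subset_of_nonneg (fun d hd => ?_)
            fun e _ _ => pow_nonneg hx e)
          exact mem_range.2 (Nat.mem_properDivisors.1 hd).2
      _ ≤ _ := by
        rw [← sum_neg_distrib]
        refine sum_le_sum fun d _ => ?_
        have : (-1 : R) ≤ moebius (n / d) := by
          exact_mod_cast (abs_le.1 abs_moebius_le_one).1
        nlinarith [pow_nonneg hx d]
  rw [hswap, ← Nat.cons_self_properDivisors hn, sum_cons,
    Nat.div_self (Nat.pos_of_ne_zero hn), moebius_apply_one, Int.cast_one, one_mul]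
  linarith

theorem pow_add_one_div_two_lt_mul_sum_moebius {q : R} (hq : 5 ≤ q) {n : ℕ} (hn : n ≠ 0) :
    (q ^ n + 1) / 2 < (q - 1) / q * ∑ d ∈ n.divisors, (moebius d : R) * q ^ (n / d) := by
  have hM := sub_geom_sum_le_sum_moebius_mul_pow (by linarith : (0 : R) ≤ q) hn
  have hgeom := geom_sum_mul q n
  have hqn : q ≤ q ^ n := le_self_pow₀ (by linarith) hn
  rw [div_mul_eq_mul_div, lt_div_iff₀ (by linarith)]
  nlinarith

end MoebiusBound

theorem stmt15_general {K L : Type} [Field K] [Fintype K] [Field L] [Fintype L] [Algebra K L]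
    {p q n : ℕ} [CharP K p] (hq : Fintype.card K = q)
    (h5 : 5 ≤ q) (hn : Module.finrank K L = n) (hn1 : 1 ≤ n) (hpn : ¬ p ∣ n) :
    ((q : ℚ) - 1) / q * ∑ d ∈ n.divisors, (moebius d : ℚ) * (q : ℚ) ^ (n / d)
        - ((q : ℚ) ^ n + 1) / 2
      ≤ (Nat.card {α : L // IntermediateField.adjoin K {α} = ⊤ ∧
          Algebra.trace K L α ≠ 0 ∧ Irreducible (X ^ 2 - C α * X + 1 : L[X])} : ℚ) ∧
    0 < Nat.card {α : L // IntermediateField.adjoin K {α} = ⊤ ∧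
          Algebra.trace K L α ≠ 0 ∧ Irreducible (X ^ 2 - C α * X + 1 : L[X])} := by
  classical
  subst hq hn
  have hnK : (finrank K L : K) ≠ 0 := by rwa [Ne, CharP.cast_eq_zero_iff K p]
  have htrace := congrArg (Nat.cast : ℕ → ℚ) <| card_mul_card_filter_trace_ne_zero
    (P := fun α : L => K⟮α⟯ = ⊤) (fun α t => by rw [adjoin_simple_add_algebraMap]) hnK
  push_cast [Nat.cast_sub Fintype.card_pos] at htrace
  have hcover : #{α : L | K⟮α⟯ = ⊤ ∧ Algebra.trace K L α ≠ 0} ≤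
      #{α : L | K⟮α⟯ = ⊤ ∧ Algebra.trace K L α ≠ 0 ∧ Irreducible (X ^ 2 - C α * X + 1 : L[X])} +
        #{α : L | ¬ Irreducible (X ^ 2 - C α * X + 1 : L[X])} := by
    refine (card_le_card fun α hα => ?_).trans (card_union_le _ _)
    by_cases hirr : Irreducible (X ^ 2 - C α * X + 1 : L[X]) <;> simp_all
  have hred : 2 * (#{α : L | ¬ Irreducible (X ^ 2 - C α * X + 1 : L[X])} : ℚ) ≤
      Fintype.card K ^ finrank K L + 1 := by
    exact_mod_cast Module.card_eq_pow_finrank (K := K) (V := L) ▸ two_mul_card_not_irreducible_le L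
  have hbound := pow_add_one_div_two_lt_mul_sum_moebius (q := (Fintype.card K : ℚ))
    (by exact_mod_cast h5) (n := finrank K L) (by omega)
  have hq : (0 : ℚ) < Fintype.card K := by exact_mod_cast Fintype.card_pos
  rw [Nat.card_eq_fintype_card, Fintype.card_subtype]
  rw [← card_filter_adjoin_eq_top, div_mul_eq_mul_div, ← htrace, mul_div_cancel_left₀ _ hq.ne']
    at hbound ⊢
  have hcover' := (Nat.cast_le (α := ℚ)).2 hcover
  push_cast at hcover'
  exact ⟨by linarith, (Nat.cast_pos (α := ℚ)).1 (by linarith)⟩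

/-- For `q ≥ 5` a prime power of characteristic `p` with `p ∤ n`, the number of
`α ∈ F_{q^n}` generating `F_{q^n}` over `F_q`, of nonzero trace, and with
`x² - αx + 1` irreducible over `F_{q^n}` is at least
`((q-1)/q)·Σ_{d|n} μ(d) q^(n/d) - (q^n + 1)/2`, and in particular positive. -/
theorem stmt15 {K L : Type} [Field K] [Fintype K] [Field L] [Fintype L] [Algebra K L]
    {p q n : ℕ} (hp : p.Prime) [CharP K p] (hq : Fintype.card K = q)
    (h5 : 5 ≤ q) (hn : Module.finrank K L = n) (hn1 : 1 ≤ n) (hpn : ¬ p ∣ n) :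
    ((q : ℚ) - 1) / q * ∑ d ∈ n.divisors, (moebius d : ℚ) * (q : ℚ) ^ (n / d)
        - ((q : ℚ) ^ n + 1) / 2
      ≤ (Nat.card {α : L // IntermediateField.adjoin K {α} = ⊤ ∧
          Algebra.trace K L α ≠ 0 ∧ Irreducible (X ^ 2 - C α * X + 1 : L[X])} : ℚ) ∧
    0 < Nat.card {α : L // IntermediateField.adjoin K {α} = ⊤ ∧
          Algebra.trace K L α ≠ 0 ∧ Irreducible (X ^ 2 - C α * X + 1 : L[X])} :=
  stmt15_general hq h5 hn hn1 hpn
end
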